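/- Setting P(a,b) = Cat(a)·Cat(b)/Cat(a+b+1) where Cat(n) is the n-th Catalan number, the recursion P(a+1,b+1) = P(a,b+1)·C(a,b+1) + P(a+1,b)·(1 − C(a+1,b)) holds for all nonnegative integers a, b, where C(a,b) = ((a+1)(2a+1)(a+3b+3))/((a+b+1)(a+b+2)(2(a+b)+3)). -/
import Mathlib


/-- The leaf-growth split probability `C(a,b)`. -/
def lgC (a b : ℕ) : ℚ :=
  ((a + 1) * (2 * a + 1) * (a + 3 * b + 3)) /
    ((a + b + 1) * (a + b + 2) * (2 * (a + b) + 3))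

/-- The profile probability `P(a,b) = Cat(a)Cat(b)/Cat(a+b+1)`. -/
def lgP (a b : ℕ) : ℚ := (catalan a * catalan b : ℚ) / catalan (a + b + 1)

lemma catalan_ne_q (n : ℕ) : (catalan n : ℚ) ≠ 0 := by
  have h := succ_mul_catalan_eq_centralBinom n
  have hc := n.centralBinom_pos
  have : 0 < catalan n := by
    rcases Nat.eq_zero_or_pos (catalan n) with h0 | h0
    · rw [h0, Nat.mul_zero] at h; omega
    · exact h0
  exact_mod_cast this.ne'

lemma cat_succ_q (n : ℕ) :
    (catalan (n + 1) : ℚ) = 2 * (2 * n + 1) / (n + 2) * catalan n := by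
  have h : (n + 1) * ((n + 2) * catalan (n + 1)) = (n + 1) * (2 * (2 * n + 1) * catalan n) := by
    have h1 := succ_mul_catalan_eq_centralBinom (n + 1)
    have h2 := Nat.succ_mul_centralBinom_succ n
    have h3 := succ_mul_catalan_eq_centralBinom n
    calc (n + 1) * ((n + 2) * catalan (n + 1)) = (n + 1) * Nat.centralBinom (n + 1) := by rw [← h1]
      _ = 2 * (2 * n + 1) * Nat.centralBinom n := h2
      _ = 2 * (2 * n + 1) * ((n + 1) * catalan n) := by rw [← h3]
      _ = (n + 1) * (2 * (2 * n + 1) * catalan n) := by ring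
  have h' := Nat.eq_of_mul_eq_mul_left (Nat.succ_pos n) h
  have hq : ((n : ℚ) + 2) * catalan (n + 1) = 2 * (2 * n + 1) * catalan n := by
    exact_mod_cast congrArg (Nat.cast : ℕ → ℚ) h'
  have hn : ((n : ℚ) + 2) ≠ 0 := by positivity
  field_simp
  linarith [hq]

theorem lgP_recursion (a b : ℕ) :
    lgP (a + 1) (b + 1) =
      lgP a (b + 1) * lgC a (b + 1) + lgP (a + 1) b * (1 - lgC (a + 1) b) := by
  have e1 : a + 1 + (b + 1) + 1 = (a + b + 1) + 1 + 1 := by omega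
  have e2 : a + (b + 1) + 1 = (a + b + 1) + 1 := by omega
  have e3 : a + 1 + b + 1 = (a + b + 1) + 1 := by omega
  unfold lgP lgC
  rw [e1, e2, e3, cat_succ_q (a + b + 1 + 1), cat_succ_q (a + b + 1),
    cat_succ_q a, cat_succ_q b]
  have hA := catalan_ne_q a
  have hB := catalan_ne_q b
  have hZ := catalan_ne_q (a + b + 1)
  generalize (catalan a : ℚ) = X at hA ⊢
  generalize (catalan b : ℚ) = Y at hB ⊢
  generalize (catalan (a + b + 1) : ℚ) = Z at hZ ⊢
  push_cast
  have h1 : (a : ℚ) + b + 1 + 2 ≠ 0 := by positivity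
  have h2 : (a : ℚ) + b + 1 + 1 + 2 ≠ 0 := by positivity
  have h3 : (a : ℚ) + 2 ≠ 0 := by positivity
  have h4 : (b : ℚ) + 2 ≠ 0 := by positivity
  have h5 : (a : ℚ) + b + 1 ≠ 0 := by positivity
  have h6 : (a : ℚ) + b + 2 ≠ 0 := by positivity
  have h7 : 2 * ((a : ℚ) + b) + 3 ≠ 0 := by positivity
  have h8 : (a : ℚ) + 1 + b + 1 ≠ 0 := by positivity
  have h9 : (a : ℚ) + 1 + b + 2 ≠ 0 := by positivity
  have h10 : 2 * ((a : ℚ) + 1 + b) + 3 ≠ 0 := by positivity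
  field_simp
  ring
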